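/- Let n be a nonnegative integer, let α > -1 and let s ∈ ℝ with s + α > -1. Then the power moment of the Laguerre Rakhmanov density satisfies ∫₀^∞ x^{s+α} e^{-x} [L_n^{(α)}(x)]² dx = Γ(α+s+1) C(n+α, n)² · F₂(α+s+1; −n, −n; α+1, α+1; 1, 1). -/

import Mathlib

open MeasureTheory Finset Real

/-- Pochhammer symbol `(a)_k = a (a+1) ⋯ (a+k-1)`. -/
noncomputable def poch (a : ℝ) (k : ℕ) : ℝ := ∏ i ∈ Finset.range k, (a + i)

/-- Generalized binomial coefficient `C(a, j) = (a-j+1)_j / j!`. -/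
noncomputable def gbinom (a : ℝ) (j : ℕ) : ℝ := poch (a - j + 1) j / (j.factorial : ℝ)

/-- Generalized Laguerre polynomial `L_n^{(α)}`. -/
noncomputable def Lag (α : ℝ) (n : ℕ) (x : ℝ) : ℝ :=
  ∑ i ∈ Finset.range (n + 1),
    ((-1 : ℝ) ^ i / (i.factorial : ℝ)) * gbinom ((n : ℝ) + α) (n - i) * x ^ i

/-- Physicists' Hermite polynomial `H_n`. -/
noncomputable def Herm (n : ℕ) (x : ℝ) : ℝ :=
  ∑ k ∈ Finset.range (n / 2 + 1),
    ((-1 : ℝ) ^ k * (n.factorial : ℝ) / ((k.factorial : ℝ) * ((n - 2 * k).factorial : ℝ))) *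
      (2 * x) ^ (n - 2 * k)

/-- Jacobi polynomial `P_n^{(α,γ)}`. -/
noncomputable def Jac (α γ : ℝ) (n : ℕ) (x : ℝ) : ℝ :=
  ∑ k ∈ Finset.range (n + 1),
    gbinom ((n : ℝ) + α) (n - k) * gbinom ((n : ℝ) + γ) k *
      ((x - 1) / 2) ^ k * ((x + 1) / 2) ^ (n - k)

/-- Terminating Lauricella function of type A. -/
noncomputable def lauricellaA {r : ℕ} (a : ℝ) (m : Fin r → ℕ) (c x : Fin r → ℝ) : ℝ :=
  ∑ j ∈ Fintype.piFinset (fun i => Finset.range (m i + 1)),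
    poch a (∑ i, j i) *
      ∏ i, (poch (-(m i : ℝ)) (j i) / (poch (c i) (j i) * ((j i).factorial : ℝ)) * x i ^ (j i))

/-- Terminating Gauss hypergeometric sum `₂F₁(-k, b; c; x)`. -/
noncomputable def hyp2F1 (k : ℕ) (b c x : ℝ) : ℝ :=
  ∑ j ∈ Finset.range (k + 1),
    poch (-(k : ℝ)) j * poch b j / (poch c j * (j.factorial : ℝ)) * x ^ j

/-- Terminating hypergeometric sum `₃F₂(-k, b₁, b₂; c₁, c₂; x)`. -/
noncomputable def hyp3F2 (k : ℕ) (b₁ b₂ c₁ c₂ x : ℝ) : ℝ :=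
  ∑ j ∈ Finset.range (k + 1),
    poch (-(k : ℝ)) j * poch b₁ j * poch b₂ j /
      (poch c₁ j * poch c₂ j * (j.factorial : ℝ)) * x ^ j

/-- Gauss hypergeometric series `₂F₁(a, b; c; x)` (a terminating series when `a` or `b`
is a nonpositive integer). -/
noncomputable def hypSum (a b c x : ℝ) : ℝ :=
  ∑' j : ℕ, poch a j * poch b j / (poch c j * (j.factorial : ℝ)) * x ^ j

/-- Terminating Appell function `F₂(a; -m₁, -m₂; c₁, c₂; x₁, x₂)`. -/
noncomputable def appellF2 (a : ℝ) (m₁ m₂ : ℕ) (c₁ c₂ x₁ x₂ : ℝ) : ℝ :=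
  ∑ j₁ ∈ Finset.range (m₁ + 1), ∑ j₂ ∈ Finset.range (m₂ + 1),
    poch a (j₁ + j₂) * poch (-(m₁ : ℝ)) j₁ * poch (-(m₂ : ℝ)) j₂ /
      (poch c₁ j₁ * poch c₂ j₂ * (j₁.factorial : ℝ) * (j₂.factorial : ℝ)) * x₁ ^ j₁ * x₂ ^ j₂

/-- `1/z!` with the convention that it vanishes for negative integers `z`. -/
noncomputable def invFacZ (z : ℤ) : ℝ := if 0 ≤ z then ((z.toNat.factorial : ℕ) : ℝ)⁻¹ else 0

/-- Pochhammer symbol extended to integer index via `(a)_k = Γ(a+k)/Γ(a)` for negative `k`. -/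
noncomputable def pochZ (a : ℝ) (k : ℤ) : ℝ :=
  if 0 ≤ k then poch a k.toNat else Real.Gamma (a + (k : ℝ)) / Real.Gamma a

/-!
With `a = α + s + 1`, the weight is the Gamma density `x^(a-1) e^(-x)`, and
`L_n^{(α)}(x) = C(n+α, n) · ₁F₁(-n; α+1; x)` is a polynomial whose `i`-th coefficient is
`C(n+α, n) (-n)_i / ((α+1)_i i!)`. Squaring it gives a double sum of monomials `x^(i+j)`, whose
moments are `Γ(a + i + j) = Γ(a) (a)_(i+j)`; the resulting double sum is `Γ(a) C(n+α, n)²` times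
the Appell series `F₂(a; -n, -n; α+1, α+1; 1, 1)`, term by term.
-/

lemma poch_succ (a : ℝ) (k : ℕ) : poch a (k + 1) = poch a k * (a + k) :=
  prod_range_succ _ _

lemma poch_add (a : ℝ) (m k : ℕ) : poch a (m + k) = poch a m * poch (a + m) k := by
  simp only [poch, prod_range_add, Nat.cast_add, add_assoc]

lemma poch_pos {a : ℝ} (ha : 0 < a) (k : ℕ) : 0 < poch a k :=
  prod_pos fun i _ => by positivity

lemma poch_eq_eval_ascPochhammer (a : ℝ) (k : ℕ) : poch a k = (ascPochhammer ℝ k).eval a := by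
  induction k with
  | zero => simp [poch]
  | succ k ih => rw [poch_succ, ascPochhammer_succ_eval, ih]

lemma poch_neg_natCast (n k : ℕ) : poch (-(n : ℝ)) k = (-1) ^ k * n.descFactorial k := by
  rw [poch_eq_eval_ascPochhammer, ascPochhammer_eval_neg_eq_descPochhammer,
    descPochhammer_eval_eq_descFactorial]

lemma Gamma_add_natCast {a : ℝ} (ha : 0 < a) (k : ℕ) :
    Gamma (a + k) = poch a k * Gamma a := by
  induction k with
  | zero => simp [poch]
  | succ k ih =>
    rw [Nat.cast_succ, ← add_assoc, Gamma_add_one (by positivity), ih, poch_succ]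
    ring

lemma gbinom_natCast_add_sub (α : ℝ) {n j : ℕ} (h : j ≤ n) :
    gbinom (n + α) (n - j) = poch (α + 1 + j) (n - j) / (n - j).factorial := by
  rw [gbinom, Nat.cast_sub h]
  ring_nf

lemma gbinom_natCast_add_self (α : ℝ) (n : ℕ) :
    gbinom (n + α) n = poch (α + 1) n / n.factorial := by
  rw [gbinom]
  ring_nf

lemma Lag_coeff_eq {α : ℝ} (hα : -1 < α) {n i : ℕ} (hi : i ≤ n) :
    (-1) ^ i / i.factorial * gbinom (n + α) (n - i) =
      gbinom (n + α) n * (poch (-(n : ℝ)) i / (poch (α + 1) i * i.factorial)) := by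
  have hsplit : poch (α + 1) n = poch (α + 1) i * poch (α + 1 + i) (n - i) := by
    rw [← poch_add, Nat.add_sub_cancel' hi]
  have hfac : ((n - i).factorial : ℝ) * n.descFactorial i = n.factorial := by
    exact_mod_cast Nat.factorial_mul_descFactorial hi
  have hpoch : poch (α + 1) i ≠ 0 := (poch_pos (by linarith) i).ne'
  have hdesc : (n.descFactorial i : ℝ) ≠ 0 :=
    Nat.cast_ne_zero.mpr fun h => by rw [Nat.descFactorial_eq_zero_iff_lt] at h; omega
  rw [gbinom_natCast_add_sub α hi, gbinom_natCast_add_self, hsplit, poch_neg_natCast, ← hfac]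
  field_simp

lemma Lag_eq_sum {α : ℝ} (hα : -1 < α) (n : ℕ) (x : ℝ) :
    Lag α n x = ∑ i ∈ range (n + 1),
      gbinom (n + α) n * (poch (-(n : ℝ)) i / (poch (α + 1) i * i.factorial)) * x ^ i :=
  sum_congr rfl fun i hi => by
    rw [Lag_coeff_eq hα (Nat.lt_succ_iff.mp (mem_range.mp hi))]

lemma rpow_sub_one_mul_exp_neg_mul_pow {a x : ℝ} (hx : 0 < x) (m : ℕ) :
    x ^ (a - 1) * exp (-x) * x ^ m = exp (-x) * x ^ (a + m - 1) := by
  rw [add_sub_right_comm, rpow_add hx, rpow_natCast]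
  ring

lemma integrableOn_rpow_sub_one_mul_exp_neg_mul_pow {a : ℝ} (ha : 0 < a) (m : ℕ) :
    IntegrableOn (fun x => x ^ (a - 1) * exp (-x) * x ^ m) (Set.Ioi 0) :=
  (GammaIntegral_convergent (by positivity : 0 < a + m)).congr_fun
    (fun _ hx => (rpow_sub_one_mul_exp_neg_mul_pow hx m).symm) measurableSet_Ioi

lemma integral_rpow_sub_one_mul_exp_neg_mul_pow {a : ℝ} (ha : 0 < a) (m : ℕ) :
    ∫ x in Set.Ioi 0, x ^ (a - 1) * exp (-x) * x ^ m = Gamma a * poch a m := by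
  rw [mul_comm, ← Gamma_add_natCast ha, Gamma_eq_integral (by positivity)]
  exact setIntegral_congr_fun measurableSet_Ioi fun _ hx => rpow_sub_one_mul_exp_neg_mul_pow hx m

lemma integral_rpow_sub_one_mul_exp_neg_mul_sum_sq {a : ℝ} (ha : 0 < a) (c : ℕ → ℝ) (N : ℕ) :
    ∫ x in Set.Ioi 0, x ^ (a - 1) * exp (-x) * (∑ i ∈ range N, c i * x ^ i) ^ 2 =
      Gamma a * ∑ i ∈ range N, ∑ j ∈ range N, c i * c j * poch a (i + j) := by
  have hexpand : ∀ x : ℝ, x ^ (a - 1) * exp (-x) * (∑ i ∈ range N, c i * x ^ i) ^ 2 =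
      ∑ i ∈ range N, ∑ j ∈ range N, c i * c j * (x ^ (a - 1) * exp (-x) * x ^ (i + j)) := by
    intro x
    rw [sq, sum_mul_sum, mul_sum]
    refine sum_congr rfl fun i _ => ?_
    rw [mul_sum]
    exact sum_congr rfl fun j _ => by rw [pow_add]; ring
  have hint : ∀ i j : ℕ, IntegrableOn
      (fun x => c i * c j * (x ^ (a - 1) * exp (-x) * x ^ (i + j))) (Set.Ioi 0) :=
    fun i j => (integrableOn_rpow_sub_one_mul_exp_neg_mul_pow ha (i + j)).const_mul _
  simp_rw [hexpand]
  rw [integral_finsetSum _ fun i _ => integrable_finsetSum _ fun j _ => hint i j, mul_sum]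
  refine sum_congr rfl fun i _ => ?_
  rw [integral_finsetSum _ fun j _ => hint i j, mul_sum]
  refine sum_congr rfl fun j _ => ?_
  rw [integral_const_mul, integral_rpow_sub_one_mul_exp_neg_mul_pow ha]
  ring

/-- power moment of the Laguerre Rakhmanov density. -/
theorem laguerre_power_moment (n : ℕ) (α s : ℝ) (hα : -1 < α) (hs : -1 < s + α) :
    ∫ x in Set.Ioi (0 : ℝ), x ^ (s + α) * Real.exp (-x) * (Lag α n x) ^ 2 =
      Real.Gamma (α + s + 1) * gbinom ((n : ℝ) + α) n ^ 2 *
        appellF2 (α + s + 1) n n (α + 1) (α + 1) 1 1 := by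
  have ha : 0 < α + s + 1 := by linarith
  have hexp : s + α = (α + s + 1) - 1 := by ring
  simp_rw [Lag_eq_sum hα, hexp]
  rw [integral_rpow_sub_one_mul_exp_neg_mul_sum_sq ha, mul_assoc, appellF2]
  simp only [one_pow, mul_one, mul_sum]
  exact sum_congr rfl fun i _ => sum_congr rfl fun j _ => by ring
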